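/- Let p be a prime and let a ∈ K_p be the p-ary adding machine (odometer). Then for every n ≥ 0, the image of U_{n+1} under the linear map f ↦ f ∘ a⁻¹ − f equals U_n. -/

import Mathlib

/-- The Kaloujnine monomial `e_n(x) = Π_i x_i^{k_i}`, where `k_0, k_1, …` are the base-`p`
digits of `n`. -/
def kalMonomial (p n : ℕ) : (ℕ → ZMod p) → ZMod p :=
  fun x => ∏ i ∈ Finset.range (n + 1), x i ^ (n / p ^ i % p)

/-- `U_n`: the `ZMod p`-linear span of the monomials `e_0, e_1, …, e_n`. -/
def Uspan (p n : ℕ) : Submodule (ZMod p) ((ℕ → ZMod p) → ZMod p) :=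
  Submodule.span (ZMod p) (kalMonomial p '' {m : ℕ | m ≤ n})

/-!
Write `D f = f ∘ a⁻¹ - f` and `(h ⊗ g)(x) = h(x₀) · g(x₁, x₂, …)`. Since `a⁻¹` subtracts one from
the head digit and borrows from the tail exactly when `x₀ = 0`,
`D (h ⊗ g) = Δh ⊗ g + h(-1) · (δ₀ ⊗ D g)` with `Δh(t) = h(t - 1) - h(t)` and `δ₀ = 1 - t^(p-1)`
the indicator of `0` (Fermat). The monomials satisfy `e_{j + p m} = t^j ⊗ e_m` for `j < p`, and
`δ₀ ⊗ e_k = e_{p k} - e_{p k + p - 1}`. Writing `n + 1 = j + p m`, strong induction on `n` gives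
`D e_{n+1} ≡ c · e_n` modulo `U_{n-1}` with `c ≠ 0`: for `j > 0` the leading term comes from
`Δ(t^j) = -j t^(j-1) + …`, and for `j = 0` it is `-c'` with `c'` the coefficient for `D e_m`.
Hence `D` maps `U_{n+1}` onto `U_n` by triangularity.
-/

open Finset

namespace Submodule

variable {K V : Type*} [DivisionRing K] [AddCommGroup V] [Module K V]

theorem span_singleton_sup_eq_of_sub_smul_mem {W : Submodule K V} {x y : V} {c : K} (hc : c ≠ 0)
    (h : y - c • x ∈ W) : K ∙ y ⊔ W = K ∙ x ⊔ W := by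
  have hy : y ∈ K ∙ x ⊔ W := by
    rw [← sub_add_cancel y (c • x)]
    exact add_mem (mem_sup_right h) (mem_sup_left (smul_mem _ c (mem_span_singleton_self x)))
  have hx : x ∈ K ∙ y ⊔ W := by
    rw [← inv_smul_smul₀ hc x, ← sub_sub_cancel y (c • x)]
    exact smul_mem _ _ (sub_mem (mem_sup_left (mem_span_singleton_self y)) (mem_sup_right h))
  exact le_antisymm (sup_le (span_singleton_le_iff_mem _ _ |>.2 hy) le_sup_right)
    (sup_le (span_singleton_le_iff_mem _ _ |>.2 hx) le_sup_right)

theorem map_span_image_Iio_succ_of_triangular (D : V →ₗ[K] V) (e : ℕ → V) (h0 : D (e 0) = 0)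
    (hstep : ∀ n, ∃ c : K, c ≠ 0 ∧ D (e (n + 1)) - c • e n ∈ span K (e '' Set.Iio n)) (n : ℕ) :
    (span K (e '' Set.Iio (n + 1))).map D = span K (e '' Set.Iio n) := by
  have hsucc : ∀ m, span K (e '' Set.Iio (m + 1)) = K ∙ e m ⊔ span K (e '' Set.Iio m) := fun m => by
    rw [Set.Iio_add_one_eq_Iic, ← Set.Iio_insert, Set.image_insert_eq, span_insert]
  induction n with
  | zero => simp [map_span, h0]
  | succ n ih =>
    obtain ⟨c, hc, h⟩ := hstep n
    rw [hsucc, map_sup, ih, map_span, Set.image_singleton,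
      span_singleton_sup_eq_of_sub_smul_mem hc h, ← hsucc]

end Submodule

def headTailMul {R : Type*} [CommSemiring R] (h : R → R) :
    ((ℕ → R) → R) →ₗ[R] ((ℕ → R) → R) where
  toFun g x := h (x 0) * g (fun i => x (i + 1))
  map_add' _ _ := funext fun _ => mul_add _ _ _
  map_smul' _ _ := funext fun _ => mul_left_comm _ _ _

@[simp]
theorem headTailMul_apply {R : Type*} [CommSemiring R] (h : R → R) (g : (ℕ → R) → R)
    (x : ℕ → R) : headTailMul h g x = h (x 0) * g (fun i => x (i + 1)) :=
  rfl

section kalMonomial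

variable {p : ℕ}

theorem kalMonomial_zero : kalMonomial p 0 = 1 := by
  funext x
  simp [kalMonomial]

theorem kalMonomial_eq_prod_range (hp : 1 < p) {n L : ℕ} (hL : n < L) (x : ℕ → ZMod p) :
    kalMonomial p n x = ∏ i ∈ range L, x i ^ (n / p ^ i % p) := by
  refine prod_subset (range_subset_range.2 hL) fun i _ hi => ?_
  have : n < p ^ i :=
    (Nat.lt_pow_self hp).trans_le (Nat.pow_le_pow_right (by omega) (by simp at hi; omega))
  rw [Nat.div_eq_of_lt this, Nat.zero_mod, pow_zero]

theorem kalMonomial_add_mul (hp : 1 < p) {j : ℕ} (hj : j < p) (m : ℕ) :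
    kalMonomial p (j + p * m) = headTailMul (· ^ j) (kalMonomial p m) := by
  funext x
  have hdiv : (j + p * m) / p = m := by
    rw [Nat.add_mul_div_left _ _ (by omega), Nat.div_eq_of_lt hj, zero_add]
  have hm : m < j + p * m + 1 := by nlinarith
  rw [kalMonomial_eq_prod_range hp (by omega : j + p * m < j + p * m + 1 + 1), prod_range_succ',
    headTailMul_apply, kalMonomial_eq_prod_range hp hm, mul_comm]
  simp only [pow_zero, Nat.div_one, Nat.add_mul_mod_self_left, Nat.mod_eq_of_lt hj, pow_succ',
    ← Nat.div_div_eq_div_mul, hdiv]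

end kalMonomial

structure IsOdometer {p : ℕ} (a : Equiv.Perm (ℕ → ZMod p)) : Prop where
  carry : ∀ (x : ℕ → ZMod p) (k : ℕ), (∀ i < k, x i = (p : ZMod p) - 1) →
    x k ≠ (p : ZMod p) - 1 → (∀ i < k, a x i = 0) ∧ a x k = x k + 1 ∧ ∀ i, k < i → a x i = x i
  top : a (fun _ => (p : ZMod p) - 1) = fun _ => 0

namespace IsOdometer

variable {p : ℕ} {a : Equiv.Perm (ℕ → ZMod p)}

theorem apply_of_head_ne_neg_one (ha : IsOdometer a) {y : ℕ → ZMod p} (hy : y 0 ≠ -1) :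
    a y 0 = y 0 + 1 ∧ (fun i => a y (i + 1)) = fun i => y (i + 1) := by
  obtain ⟨-, h0, hgt⟩ := ha.carry y 0 (by simp) (by simpa using hy)
  exact ⟨h0, funext fun i => hgt (i + 1) i.succ_pos⟩

theorem apply_of_head_eq_neg_one (ha : IsOdometer a) {y : ℕ → ZMod p} (hy : y 0 = -1) :
    a y 0 = 0 ∧ (fun i => a y (i + 1)) = a (fun i => y (i + 1)) := by
  by_cases hall : ∀ i, y (i + 1) = -1
  · have htail : (fun i => y (i + 1)) = fun _ => (p : ZMod p) - 1 := funext fun i => by simp [hall]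
    have hy' : y = fun _ => (p : ZMod p) - 1 := funext fun i => by cases i <;> simp [hy, hall]
    rw [htail, ha.top, hy', ha.top]
    exact ⟨rfl, rfl⟩
  push Not at hall
  set k := Nat.find hall
  have hbelow : ∀ i < k, y (i + 1) = -1 := fun i hi => not_not.1 (Nat.find_min hall hi)
  obtain ⟨htail_lt, htail_k, htail_gt⟩ :=
    ha.carry (fun i => y (i + 1)) k (by simpa using hbelow) (by simpa using Nat.find_spec hall)
  obtain ⟨hy_lt, hy_k, hy_gt⟩ := ha.carry y (k + 1)
    (fun i hi => by
      rcases i with _ | i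
      · simpa using hy
      · simpa using hbelow i (by omega))
    (by simpa using Nat.find_spec hall)
  refine ⟨hy_lt 0 k.succ_pos, funext fun i => ?_⟩
  rcases lt_trichotomy i k with h | rfl | h
  · rw [hy_lt _ (by omega), htail_lt _ h]
  · rw [hy_k, htail_k]
  · rw [hy_gt _ (by omega), htail_gt _ h]

theorem symm_apply_of_head_ne_zero (ha : IsOdometer a) {x : ℕ → ZMod p} (hx : x 0 ≠ 0) :
    a.symm x 0 = x 0 - 1 ∧ (fun i => a.symm x (i + 1)) = fun i => x (i + 1) := by
  have hx' := a.apply_symm_apply x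
  have hy : a.symm x 0 ≠ -1 := fun h => hx (hx' ▸ (ha.apply_of_head_eq_neg_one h).1)
  obtain ⟨h0, htail⟩ := ha.apply_of_head_ne_neg_one hy
  rw [hx'] at h0 htail
  exact ⟨by rw [h0, add_sub_cancel_right], htail.symm⟩

theorem symm_apply_of_head_eq_zero (ha : IsOdometer a) {x : ℕ → ZMod p} (hx : x 0 = 0) :
    a.symm x 0 = -1 ∧ (fun i => a.symm x (i + 1)) = a.symm (fun i => x (i + 1)) := by
  have hx' := a.apply_symm_apply x
  have hy : a.symm x 0 = -1 := by
    by_contra h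
    have h0 := (ha.apply_of_head_ne_neg_one h).1
    rw [hx', hx] at h0
    exact h (by linear_combination -h0)
  obtain ⟨-, htail⟩ := ha.apply_of_head_eq_neg_one hy
  rw [hx'] at htail
  exact ⟨hy, by rw [htail, Equiv.symm_apply_apply]⟩

end IsOdometer

def odometerDiff {p : ℕ} (a : Equiv.Perm (ℕ → ZMod p)) :
    ((ℕ → ZMod p) → ZMod p) →ₗ[ZMod p] ((ℕ → ZMod p) → ZMod p) :=
  LinearMap.funLeft (ZMod p) (ZMod p) a.symm - LinearMap.id

theorem odometerDiff_apply {p : ℕ} (a : Equiv.Perm (ℕ → ZMod p)) (f : (ℕ → ZMod p) → ZMod p)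
    (x : ℕ → ZMod p) : odometerDiff a f x = f (a.symm x) - f x :=
  rfl

theorem odometerDiff_one {p : ℕ} (a : Equiv.Perm (ℕ → ZMod p)) : odometerDiff a 1 = 0 := by
  funext x
  simp [odometerDiff_apply]

theorem IsOdometer.odometerDiff_headTailMul {p : ℕ} {a : Equiv.Perm (ℕ → ZMod p)}
    (ha : IsOdometer a) (h : ZMod p → ZMod p) (g : (ℕ → ZMod p) → ZMod p) :
    odometerDiff a (headTailMul h g) = headTailMul (fun t => h (t - 1) - h t) g
      + h (-1) • headTailMul (Pi.single 0 1) (odometerDiff a g) := by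
  funext x
  by_cases hx : x 0 = 0
  · obtain ⟨h0, htail⟩ := ha.symm_apply_of_head_eq_zero hx
    simp only [odometerDiff_apply, headTailMul_apply, Pi.add_apply, Pi.smul_apply, smul_eq_mul,
      h0, htail, hx, zero_sub, Pi.single_eq_same]
    ring
  · obtain ⟨h0, htail⟩ := ha.symm_apply_of_head_ne_zero hx
    simp only [odometerDiff_apply, headTailMul_apply, Pi.add_apply, Pi.smul_apply, smul_eq_mul,
      h0, htail, Pi.single_eq_of_ne hx]
    ring

theorem ZMod.pi_single_zero_one_eq_one_sub_pow {p : ℕ} [Fact p.Prime] :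
    (Pi.single 0 1 : ZMod p → ZMod p) = fun t => 1 - t ^ (p - 1) := by
  funext t
  by_cases ht : t = 0
  · simp [ht, zero_pow (Nat.sub_ne_zero_of_lt (Fact.out : p.Prime).one_lt)]
  · simp [Pi.single_eq_of_ne ht, ZMod.pow_card_sub_one_eq_one ht]

theorem headTailMul_single_kalMonomial {p : ℕ} [Fact p.Prime] (k : ℕ) :
    headTailMul (Pi.single 0 1) (kalMonomial p k)
      = kalMonomial p (p * k) - kalMonomial p (p - 1 + p * k) := by
  have hp := (Fact.out : p.Prime).one_lt
  funext x
  have h0 := kalMonomial_add_mul hp (j := 0) (by omega) k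
  rw [zero_add] at h0
  rw [h0, kalMonomial_add_mul hp (j := p - 1) (by omega), ZMod.pi_single_zero_one_eq_one_sub_pow]
  simp only [headTailMul_apply, Pi.sub_apply]
  ring

/-- `U_{n-1}`, with `Ubelow p 0 = ⊥`. -/
def Ubelow (p n : ℕ) : Submodule (ZMod p) ((ℕ → ZMod p) → ZMod p) :=
  Submodule.span (ZMod p) (kalMonomial p '' Set.Iio n)

section Ubelow

variable {p : ℕ}

theorem kalMonomial_mem_Ubelow {m n : ℕ} (h : m < n) : kalMonomial p m ∈ Ubelow p n :=
  Submodule.subset_span ⟨m, h, rfl⟩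

theorem Ubelow_mono : Monotone (Ubelow p) := fun _ _ h =>
  Submodule.span_mono (Set.image_mono (Set.Iio_subset_Iio h))

theorem headTailMul_single_mem_Ubelow [Fact p.Prime] {m : ℕ} {g : (ℕ → ZMod p) → ZMod p}
    (hg : g ∈ Ubelow p m) : headTailMul (Pi.single 0 1) g ∈ Ubelow p (p * m) := by
  suffices Ubelow p m ≤ (Ubelow p (p * m)).comap (headTailMul (Pi.single 0 1)) from this hg
  rw [Ubelow, Submodule.span_le]
  rintro _ ⟨k, hk, rfl⟩
  have hp := (Fact.out : p.Prime).one_lt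
  have hpk : p * (k + 1) ≤ p * m := Nat.mul_le_mul_left p hk
  rw [SetLike.mem_coe, Submodule.mem_comap, headTailMul_single_kalMonomial]
  exact sub_mem (kalMonomial_mem_Ubelow (by rw [mul_add] at hpk; omega))
    (kalMonomial_mem_Ubelow (by rw [mul_add] at hpk; omega))

end Ubelow

theorem sub_one_pow_succ_sub_pow {R : Type*} [CommRing R] (t : R) (i : ℕ) :
    (t - 1) ^ (i + 1) - t ^ (i + 1) + ((i + 1 : ℕ) : R) * t ^ i
      = ∑ l ∈ range i, (-1) ^ (i + 1 - l) * ((i + 1).choose l : R) * t ^ l := by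
  rw [sub_eq_add_neg t 1, add_pow, sum_range_succ, sum_range_succ,
    sum_congr rfl fun l _ => mul_rotate (t ^ l) _ _]
  simp only [Nat.choose_self, Nat.choose_succ_self_right, Nat.sub_self, Nat.add_sub_cancel_left,
    pow_zero, pow_one, Nat.cast_one, mul_one]
  ring

namespace IsOdometer

variable {p : ℕ} [Fact p.Prime] {a : Equiv.Perm (ℕ → ZMod p)}

theorem odometerDiff_kalMonomial_mul_succ (ha : IsOdometer a) {k : ℕ} {c : ZMod p}
    (hk : odometerDiff a (kalMonomial p (k + 1)) - c • kalMonomial p k ∈ Ubelow p k) :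
    odometerDiff a (kalMonomial p (p * (k + 1))) + c • kalMonomial p (p - 1 + p * k)
      ∈ Ubelow p (p - 1 + p * k) := by
  have hp := (Fact.out : p.Prime).one_lt
  have hD : odometerDiff a (kalMonomial p (p * (k + 1)))
      = headTailMul (Pi.single 0 1) (odometerDiff a (kalMonomial p (k + 1))) := by
    rw [← zero_add (p * (k + 1)), kalMonomial_add_mul hp (j := 0) (by omega),
      ha.odometerDiff_headTailMul]
    funext x
    simp
  have hsplit : odometerDiff a (kalMonomial p (p * (k + 1))) + c • kalMonomial p (p - 1 + p * k)
      = headTailMul (Pi.single 0 1) (odometerDiff a (kalMonomial p (k + 1)) - c • kalMonomial p k)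
        + c • kalMonomial p (p * k) := by
    rw [hD, map_sub, map_smul, headTailMul_single_kalMonomial, smul_sub]
    abel
  rw [hsplit]
  exact add_mem (Ubelow_mono (by omega) (headTailMul_single_mem_Ubelow hk))
    (Submodule.smul_mem _ _ (kalMonomial_mem_Ubelow (by omega)))

theorem odometerDiff_kalMonomial_succ_add_mul (ha : IsOdometer a) {i m : ℕ} (hi : i + 1 < p)
    (hm : odometerDiff a (kalMonomial p m) ∈ Ubelow p m) :
    odometerDiff a (kalMonomial p (i + 1 + p * m))
        + ((i + 1 : ℕ) : ZMod p) • kalMonomial p (i + p * m) ∈ Ubelow p (i + p * m) := by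
  have hp := (Fact.out : p.Prime).one_lt
  have hlow : headTailMul (fun t => (t - 1) ^ (i + 1) - t ^ (i + 1)) (kalMonomial p m)
        + ((i + 1 : ℕ) : ZMod p) • kalMonomial p (i + p * m)
      = ∑ l ∈ range i,
          ((-1) ^ (i + 1 - l) * ((i + 1).choose l : ZMod p)) • kalMonomial p (l + p * m) := by
    funext x
    have hterm : ∀ l ∈ range i,
        (((-1) ^ (i + 1 - l) * ((i + 1).choose l : ZMod p)) • kalMonomial p (l + p * m)) x
          = (-1) ^ (i + 1 - l) * ((i + 1).choose l : ZMod p) * x 0 ^ l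
            * kalMonomial p m (fun i => x (i + 1)) := fun l hl => by
      rw [kalMonomial_add_mul hp (by simp at hl; omega), Pi.smul_apply, headTailMul_apply,
        smul_eq_mul]
      ring
    rw [Finset.sum_apply, sum_congr rfl hterm, ← sum_mul, ← sub_one_pow_succ_sub_pow,
      kalMonomial_add_mul hp (by omega)]
    simp only [Pi.add_apply, Pi.smul_apply, smul_eq_mul, headTailMul_apply]
    ring
  rw [kalMonomial_add_mul hp hi, ha.odometerDiff_headTailMul, add_right_comm, hlow]
  exact add_mem
    (sum_mem fun l hl => Submodule.smul_mem _ _ (kalMonomial_mem_Ubelow (by simp at hl; omega)))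
    (Submodule.smul_mem _ _ (Ubelow_mono (by omega) (headTailMul_single_mem_Ubelow hm)))

theorem exists_odometerDiff_kalMonomial_succ (ha : IsOdometer a) (n : ℕ) :
    ∃ c : ZMod p, c ≠ 0 ∧
      odometerDiff a (kalMonomial p (n + 1)) - c • kalMonomial p n ∈ Ubelow p n := by
  have hp := (Fact.out : p.Prime).one_lt
  induction n using Nat.strong_induction_on with
  | _ n ih =>
  have hDmem : ∀ m ≤ n, odometerDiff a (kalMonomial p m) ∈ Ubelow p m := by
    rintro (_ | k) hk
    · rw [kalMonomial_zero, odometerDiff_one]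
      exact zero_mem _
    · obtain ⟨c, -, hc⟩ := ih k (by omega)
      simpa using add_mem (Ubelow_mono k.le_succ hc)
        (Submodule.smul_mem _ c (kalMonomial_mem_Ubelow k.lt_succ_self))
  obtain ⟨j, m, hj, hn⟩ : ∃ j m, j < p ∧ j + p * m = n + 1 :=
    ⟨_, _, Nat.mod_lt _ (by omega), Nat.mod_add_div _ _⟩
  have hmp : m ≤ p * m := Nat.le_mul_of_pos_left m (by omega)
  rcases j with _ | i
  · obtain ⟨k, rfl⟩ : ∃ k, m = k + 1 := Nat.exists_eq_succ_of_ne_zero (by rintro rfl; omega)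
    have hpk : p * (k + 1) = p * k + p := by ring
    have hkp : k ≤ p * k := Nat.le_mul_of_pos_left k (by omega)
    obtain ⟨c, hc, hk⟩ := ih k (by omega)
    have hn' : n = p - 1 + p * k := by omega
    refine ⟨-c, neg_ne_zero.2 hc, ?_⟩
    rw [neg_smul, sub_neg_eq_add, ← hn, zero_add, hn']
    exact ha.odometerDiff_kalMonomial_mul_succ hk
  · obtain rfl : n = i + p * m := by omega
    refine ⟨-((i + 1 : ℕ) : ZMod p), ?_, ?_⟩
    · rw [neg_ne_zero, Ne, ZMod.natCast_eq_zero_iff]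
      exact Nat.not_dvd_of_pos_of_lt i.succ_pos hj
    · rw [neg_smul, sub_neg_eq_add, show i + p * m + 1 = i + 1 + p * m by omega]
      exact ha.odometerDiff_kalMonomial_succ_add_mul hj (hDmem m (by omega))

end IsOdometer

/-- let `a` be the `p`-ary adding machine (odometer): it adds `1` with
carry, and maps the constant sequence `p−1` to the constant sequence `0`. Then for every
`n ≥ 0`, the image of `U_{n+1}` under the linear map `f ↦ f ∘ a⁻¹ − f` equals `U_n`. -/
theorem odometer_image_Uspan (p : ℕ) (hp : p.Prime)
    (a : Equiv.Perm (ℕ → ZMod p))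
    (ha : ∀ (x : ℕ → ZMod p) (k : ℕ),
      (∀ i < k, x i = (p : ZMod p) - 1) → x k ≠ (p : ZMod p) - 1 →
      ((∀ i < k, a x i = 0) ∧ a x k = x k + 1 ∧ ∀ i, k < i → a x i = x i))
    (htop : a (fun _ => (p : ZMod p) - 1) = fun _ => 0) :
    ∀ n : ℕ,
      (fun f : (ℕ → ZMod p) → ZMod p => fun x => f (a.symm x) - f x) ''
          (Uspan p (n + 1) : Set ((ℕ → ZMod p) → ZMod p)) =
        (Uspan p n : Set ((ℕ → ZMod p) → ZMod p)) := by
  have := Fact.mk hp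
  intro n
  have hU : ∀ m, Uspan p m = Ubelow p (m + 1) := fun m => by
    rw [Ubelow, Set.Iio_add_one_eq_Iic]
    rfl
  rw [show (fun f x => f (a.symm x) - f x) = ⇑(odometerDiff a) from rfl, ← Submodule.map_coe,
    hU, hU]
  exact congrArg _ <| Submodule.map_span_image_Iio_succ_of_triangular (odometerDiff a)
    (kalMonomial p) (by rw [kalMonomial_zero, odometerDiff_one])
    (IsOdometer.exists_odometerDiff_kalMonomial_succ ⟨ha, htop⟩) (n + 1)
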